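/- Let α ∈ (0,1) and ε > 0. For each k, let x be a k-sparse random vector in ℝ^n (n ≥ k) whose k nonzero entries are i.i.d. standard normal N(0,1), with support set K. Then, as k → ∞, the probability of the following event tends to 1: for every vector x̂ ∈ ℝ^n with ‖x − x̂‖₁ ≤ α ‖x‖₁ and every k-support L of x̂, one has |K ∩ L| / k > 2Q(√(−2 log(1−α))) − ε. -/

import Mathlib

/-!
Put `t = √(−2 log(1−α))`, so that `exp (−t²/2) = 1 − α`. If `‖x − x̂‖₁ ≤ α‖x‖₁` and `L` is a
`k`-support of `x̂`, then `x̂` is at least as large on `L ∖ K` as on `K ∖ L`, which forces the mass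
of `x` outside `L` to be at most `α‖x‖₁`; hence
`(1 − α)‖x‖₁ ≤ ∑_{K ∩ L} |xᵢ| ≤ ∑_K (|xᵢ| − t)₊ + t |K ∩ L|`.
Both sums over `K` are sums of `k` i.i.d. square-integrable variables, so by Chebyshev they are
within `o(k)` of `k 𝔼|g|` and `k 𝔼(|g| − t)₊ = k ((1 − α) 𝔼|g| − 2 t Q(t))` with probability
tending to `1`, and on that event `|K ∩ L| > k (2 Q(t) − ε)`.
-/

open MeasureTheory ProbabilityTheory Filter Real
open scoped Topology

/-- The standard Gaussian upper tail function `Q`. -/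
noncomputable def gaussQ (x : ℝ) : ℝ :=
  (Real.sqrt (2 * Real.pi))⁻¹ * ∫ y in Set.Ioi x, Real.exp (-(y ^ 2) / 2)

/-- The support of a vector `x : Fin n → ℝ` as a `Finset`. -/
noncomputable def spt {n : ℕ} (x : Fin n → ℝ) : Finset (Fin n) :=
  Finset.univ.filter (fun i => x i ≠ 0)

section Gaussian

open Set

lemma integrable_exp_neg_sq_div_two : Integrable fun y : ℝ ↦ exp (-(y ^ 2) / 2) := by
  simpa [neg_div, div_eq_inv_mul] using integrable_exp_neg_mul_sq (b := 1 / 2) (by norm_num)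

lemma integrable_mul_exp_neg_sq_div_two : Integrable fun y : ℝ ↦ y * exp (-(y ^ 2) / 2) := by
  simpa [neg_div, div_eq_inv_mul] using integrable_mul_exp_neg_mul_sq (b := 1 / 2) (by norm_num)

lemma integral_Ioi_mul_exp_neg_sq_div_two (a : ℝ) :
    ∫ y in Ioi a, y * exp (-(y ^ 2) / 2) = exp (-(a ^ 2) / 2) := by
  have hderiv (y : ℝ) : HasDerivAt (fun z ↦ -exp (-(z ^ 2) / 2)) (y * exp (-(y ^ 2) / 2)) y := by
    have h : HasDerivAt (fun z : ℝ ↦ -(z ^ 2) / 2) (-y) y :=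
      ((hasDerivAt_pow 2 y).neg.div_const 2).congr_deriv (by ring)
    exact h.exp.neg.congr_deriv (by ring)
  have hlim : Tendsto (fun z : ℝ ↦ -exp (-(z ^ 2) / 2)) atTop (nhds 0) := by
    have : Tendsto (fun z : ℝ ↦ -(z ^ 2) / 2) atTop atBot :=
      ((tendsto_pow_atTop two_ne_zero).atTop_mul_const_of_neg (r := -(1 / 2))
        (by norm_num)).congr fun z ↦ by ring
    simpa using (tendsto_exp_atBot.comp this).neg
  rw [integral_Ioi_of_hasDerivAt_of_tendsto' (fun y _ ↦ hderiv y)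
    integrable_mul_exp_neg_sq_div_two.integrableOn hlim]
  simp

lemma integral_posPart_abs_sub_gaussianReal {t : ℝ} (ht : 0 ≤ t) :
    ∫ y, max (|y| - t) 0 ∂gaussianReal 0 1 =
      2 * (√(2 * π))⁻¹ * exp (-(t ^ 2) / 2) - 2 * t * gaussQ t := by
  set c := (√(2 * π))⁻¹
  have hpdf (y : ℝ) : gaussianPDFReal 0 1 y = c * exp (-(y ^ 2) / 2) := by
    simp [gaussianPDFReal, c, neg_div]
  have heven : (fun y ↦ gaussianPDFReal 0 1 y • max (|y| - t) 0) =
      fun y ↦ (fun u ↦ c * exp (-(u ^ 2) / 2) * max (u - t) 0) |y| := by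
    ext y; simp [hpdf, sq_abs]
  have hIoi : ∫ u in Ioi 0, c * exp (-(u ^ 2) / 2) * max (u - t) 0 =
      ∫ u in Ioi t, (c * (u * exp (-(u ^ 2) / 2)) - c * t * exp (-(u ^ 2) / 2)) := by
    rw [setIntegral_congr_fun measurableSet_Ioi (g := (Ioi t).indicator fun u ↦
      c * (u * exp (-(u ^ 2) / 2)) - c * t * exp (-(u ^ 2) / 2)) fun u _ ↦ ?_,
      setIntegral_indicator measurableSet_Ioi, Ioi_inter_Ioi, sup_of_le_right ht]
    by_cases hu : t < u
    · simp only [indicator_of_mem (Set.mem_Ioi.mpr hu), max_eq_left (sub_nonneg.mpr hu.le)]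
      ring
    · simp [hu, max_eq_right (sub_nonpos.mpr (not_lt.mp hu))]
  rw [integral_gaussianReal_eq_integral_smul one_ne_zero, heven,
    integral_comp_abs (f := fun u ↦ c * exp (-(u ^ 2) / 2) * max (u - t) 0), hIoi,
    integral_sub (integrable_mul_exp_neg_sq_div_two.const_mul c).integrableOn
      (integrable_exp_neg_sq_div_two.const_mul (c * t)).integrableOn,
    integral_const_mul, integral_const_mul, integral_Ioi_mul_exp_neg_sq_div_two, gaussQ]
  ring

lemma integral_posPart_abs_sub_gaussianReal_eq {t : ℝ} (ht : 0 ≤ t) :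
    ∫ y, max (|y| - t) 0 ∂gaussianReal 0 1 =
      exp (-(t ^ 2) / 2) * ∫ y, |y| ∂gaussianReal 0 1 - t * (2 * gaussQ t) := by
  have h₀ := integral_posPart_abs_sub_gaussianReal le_rfl
  simp only [sub_zero, abs_nonneg, max_eq_left, ne_eq, OfNat.ofNat_ne_zero, not_false_eq_true,
    zero_pow, neg_zero, zero_div, exp_zero, mul_one, mul_zero, zero_mul] at h₀
  rw [integral_posPart_abs_sub_gaussianReal ht, h₀]
  ring

end Gaussian

lemma exp_neg_sq_sqrt_neg_two_mul_log_div_two {a : ℝ} (ha₀ : 0 < a) (ha₁ : a ≤ 1) :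
    exp (-(√(-2 * log a) ^ 2) / 2) = a := by
  rw [sq_sqrt (by linarith [log_nonpos ha₀.le ha₁]), show -(-2 * log a) / 2 = log a by ring,
    exp_log ha₀]

lemma abs_max_abs_sub_le {t : ℝ} (ht : 0 ≤ t) (y : ℝ) : |max (|y| - t) 0| ≤ |y| := by
  rw [abs_of_nonneg (le_max_right _ _)]
  exact max_le (by linarith) (abs_nonneg y)

open Finset

lemma sum_le_sum_of_card_le_of_forall_le {ι : Type*} {s t : Finset ι} {g : ι → ℝ}
    (hg : ∀ i ∈ t, 0 ≤ g i) (hst : #s ≤ #t) (h : ∀ j ∈ s, ∀ i ∈ t, g j ≤ g i) :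
    ∑ j ∈ s, g j ≤ ∑ i ∈ t, g i := by
  rcases t.eq_empty_or_nonempty with rfl | ht
  · simp [card_eq_zero.mp (Nat.le_zero.mp hst)]
  calc ∑ j ∈ s, g j ≤ #s • t.inf' ht g :=
        sum_le_card_nsmul s g _ fun j hj ↦ le_inf' ht g fun i hi ↦ h j hj i hi
    _ ≤ #t • t.inf' ht g := nsmul_le_nsmul_left (le_inf' ht g hg) hst
    _ ≤ ∑ i ∈ t, g i := card_nsmul_le_sum t g _ fun i hi ↦ inf'_le g hi

lemma one_sub_mul_sum_abs_le_sum_abs_inter {n : ℕ} {α : ℝ} (x xhat : Fin n → ℝ)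
    {L : Finset (Fin n)} (hcard : #(spt x) ≤ #L) (hL : ∀ i ∈ L, ∀ j ∉ L, |xhat j| ≤ |xhat i|)
    (hle : ∑ i, |x i - xhat i| ≤ α * ∑ i, |x i|) :
    (1 - α) * ∑ i, |x i| ≤ ∑ i ∈ spt x ∩ L, |x i| := by
  set S := spt x
  have hS : ∑ i ∈ S, |x i| = ∑ i, |x i| :=
    sum_subset (subset_univ S) fun i _ hi ↦ by simp_all [S, spt]
  have hxhat : ∑ i ∈ S \ L, |xhat i| ≤ ∑ i ∈ L \ S, |xhat i| :=
    sum_le_sum_of_card_le_of_forall_le (fun _ _ ↦ abs_nonneg _)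
      (card_sdiff_le_card_sdiff_iff.mpr hcard)
      fun j hj i hi ↦ hL i (mem_sdiff.mp hi).1 j (mem_sdiff.mp hj).2
  have hLS : ∑ i ∈ L \ S, |xhat i| = ∑ i ∈ L \ S, |x i - xhat i| :=
    sum_congr rfl fun i hi ↦ by
      have : x i = 0 := by simpa [S, spt] using (mem_sdiff.mp hi).2
      simp [this]
  have hSL : ∑ i ∈ S \ L, |x i| ≤ ∑ i ∈ S \ L, |x i - xhat i| + ∑ i ∈ S \ L, |xhat i| := by
    rw [← sum_add_distrib]
    exact sum_le_sum fun i _ ↦ by linarith [abs_sub_abs_le_abs_sub (x i) (xhat i)]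
  have hdiff : ∑ i ∈ S \ L, |x i - xhat i| + ∑ i ∈ L \ S, |x i - xhat i| ≤
      ∑ i, |x i - xhat i| := by
    rw [← sum_union disjoint_sdiff_sdiff]
    exact sum_le_sum_of_subset_of_nonneg (subset_univ _) fun _ _ _ ↦ abs_nonneg _
  have hsplit := sum_inter_add_sum_sdiff S L fun i ↦ |x i|
  linarith

lemma sum_abs_inter_le {n : ℕ} (x : Fin n → ℝ) (L : Finset (Fin n)) (t : ℝ) :
    ∑ i ∈ spt x ∩ L, |x i| ≤ ∑ i, max (|x i| - t) 0 + #(spt x ∩ L) * t :=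
  calc ∑ i ∈ spt x ∩ L, |x i| ≤ ∑ i ∈ spt x ∩ L, (max (|x i| - t) 0 + t) :=
        sum_le_sum fun i _ ↦ by linarith [le_max_left (|x i| - t) 0]
    _ = ∑ i ∈ spt x ∩ L, max (|x i| - t) 0 + #(spt x ∩ L) * t := by
        rw [sum_add_distrib, sum_const, nsmul_eq_mul]
    _ ≤ ∑ i, max (|x i| - t) 0 + #(spt x ∩ L) * t :=
        add_le_add_left (sum_le_sum_of_subset_of_nonneg (subset_univ _)
          fun _ _ _ ↦ le_max_right _ _) _

lemma card_spt_le {n : ℕ} {x : Fin n → ℝ} {K : Finset (Fin n)} (hx : ∀ i ∉ K, x i = 0) :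
    #(spt x) ≤ #K :=
  card_le_card fun i hi ↦ by_contra fun hK ↦ by simp [spt, hx i hK] at hi

lemma sub_lt_card_spt_inter_div {n k : ℕ} {α ε t m q : ℝ} (x xhat : Fin n → ℝ)
    {L : Finset (Fin n)} (hα₀ : 0 ≤ α) (hα₁ : α ≤ 1) (hε : 0 ≤ ε) (ht : 0 < t)
    (hcard : #(spt x) ≤ k) (hL : #L = k) (htop : ∀ i ∈ L, ∀ j ∉ L, |xhat j| ≤ |xhat i|)
    (hle : ∑ i, |x i - xhat i| ≤ α * ∑ i, |x i|)
    (h₁ : |∑ i, |x i| - k * m| < k * (ε * t / 2))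
    (h₂ : |∑ i, max (|x i| - t) 0 - k * ((1 - α) * m - t * q)| < k * (ε * t / 2)) :
    q - ε < #(spt x ∩ L) / k := by
  have hk : (0 : ℝ) < k := Nat.cast_pos.mpr <| Nat.pos_of_ne_zero <| by
    rintro rfl
    exact (abs_nonneg _).not_gt (by simpa using h₁)
  have hdet := (one_sub_mul_sum_abs_le_sum_abs_inter x xhat (hL ▸ hcard) htop hle).trans
    (sum_abs_inter_le x L t)
  have h₁' := mul_le_mul_of_nonneg_left (abs_lt.mp h₁).1.le (sub_nonneg.mpr hα₁)
  have h₂' := (abs_lt.mp h₂).2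
  have hαkεt : 0 ≤ α * k * ε * t := by positivity
  rw [lt_div_iff₀ hk]
  refine lt_of_mul_lt_mul_right ?_ ht.le
  linarith

lemma meas_ge_le_of_iIndepFun_of_map_eq {Ω ι : Type*} [MeasurableSpace Ω] {μ : Measure Ω}
    [IsProbabilityMeasure μ] {X : ι → Ω → ℝ} {K : Finset ι} {ν : Measure ℝ} {f : ℝ → ℝ}
    (hX : ∀ i ∈ K, AEMeasurable (X i) μ)
    (hindep : iIndepFun (fun i : K ↦ X i) μ) (hlaw : ∀ i ∈ K, μ.map (X i) = ν)
    (hf : Measurable f) (hf₂ : MemLp f 2 ν) {r : ℝ} (hr : 0 < r) :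
    μ {ω | r ≤ |∑ i ∈ K, f (X i ω) - #K * ∫ y, f y ∂ν|} ≤
      ENNReal.ofReal (#K * (∫ y, f y ^ 2 ∂ν) / r ^ 2) := by
  have hmemLp : ∀ i ∈ K, MemLp (f ∘ X i) 2 μ := fun i hi ↦
    (memLp_map_measure_iff (hlaw i hi ▸ hf₂.1) (hX i hi)).mp (hlaw i hi ▸ hf₂)
  have hmean : ∀ i ∈ K, μ[f ∘ X i] = ∫ y, f y ∂ν := fun i hi ↦ by
    rw [← hlaw i hi, integral_map (hX i hi) hf.aestronglyMeasurable]; rfl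
  have hvar : ∀ i ∈ K, variance (f ∘ X i) μ ≤ ∫ y, f y ^ 2 ∂ν := fun i hi ↦ by
    refine (variance_le_expectation_sq (hmemLp i hi).1).trans_eq ?_
    rw [← hlaw i hi, integral_map (hX i hi) (hf.pow_const 2).aestronglyMeasurable]; rfl
  have hpair : Set.Pairwise (K : Set ι) fun i j ↦ IndepFun (f ∘ X i) (f ∘ X j) μ :=
    fun i hi j hj hij ↦ (hindep.indepFun (i := ⟨i, hi⟩) (j := ⟨j, hj⟩) (by simpa using hij)).comp
      hf hf
  have hES : μ[∑ i ∈ K, f ∘ X i] = #K * ∫ y, f y ∂ν := by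
    simp only [Finset.sum_apply]
    rw [integral_finsetSum K fun i hi ↦ (hmemLp i hi).integrable one_le_two,
      Finset.sum_congr rfl hmean, sum_const, nsmul_eq_mul]
  have hVS : variance (∑ i ∈ K, f ∘ X i) μ ≤ #K * ∫ y, f y ^ 2 ∂ν := by
    rw [IndepFun.variance_sum hmemLp hpair]
    exact (sum_le_sum hvar).trans_eq (by rw [sum_const, nsmul_eq_mul])
  have hcheb := meas_ge_le_variance_div_sq (memLp_finsetSum' K hmemLp) hr
  rw [hES] at hcheb
  simp only [Finset.sum_apply, Function.comp_apply] at hcheb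
  exact hcheb.trans (ENNReal.ofReal_le_ofReal (by gcongr))

lemma tendsto_meas_ge_mul_of_iIndepFun {Ω ι : ℕ → Type*} [∀ k, MeasurableSpace (Ω k)]
    {μ : ∀ k, Measure (Ω k)} [∀ k, IsProbabilityMeasure (μ k)] {X : ∀ k, ι k → Ω k → ℝ}
    {K : ∀ k, Finset (ι k)} (hK : ∀ k, #(K k) = k) {ν : Measure ℝ} {f : ℝ → ℝ}
    (hX : ∀ k, ∀ i ∈ K k, AEMeasurable (X k i) (μ k))
    (hindep : ∀ k, iIndepFun (fun i : K k ↦ X k i) (μ k))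
    (hlaw : ∀ k, ∀ i ∈ K k, (μ k).map (X k i) = ν)
    (hf : Measurable f) (hf₂ : MemLp f 2 ν) {δ : ℝ} (hδ : 0 < δ) :
    Tendsto (fun k : ℕ ↦ μ k {ω | k * δ ≤ |∑ i ∈ K k, f (X k i ω) - k * ∫ y, f y ∂ν|})
      atTop (𝓝 0) := by
  set C := (∫ y, f y ^ 2 ∂ν) / δ ^ 2
  have hbound : Tendsto (fun k : ℕ ↦ ENNReal.ofReal (C / k)) atTop (𝓝 0) := by
    simpa using ENNReal.tendsto_ofReal (tendsto_const_div_atTop_nhds_zero_nat C)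
  refine tendsto_of_tendsto_of_tendsto_of_le_of_le' tendsto_const_nhds hbound
    (Eventually.of_forall fun _ ↦ zero_le) ?_
  filter_upwards [eventually_gt_atTop 0] with k hk
  have h := meas_ge_le_of_iIndepFun_of_map_eq (hX k) (hindep k) (hlaw k) hf hf₂
    (mul_pos (Nat.cast_pos.mpr hk) hδ)
  rw [hK k] at h
  exact h.trans_eq (by congr 1; simp only [C]; field_simp)

lemma tendsto_measure_one_of_compl_subset_union {α : Type*} {l : Filter α} {Ω : α → Type*}
    [∀ a, MeasurableSpace (Ω a)] {μ : ∀ a, Measure (Ω a)} [∀ a, IsProbabilityMeasure (μ a)]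
    {S A B : ∀ a, Set (Ω a)} (hsub : ∀ a, ∀ ω, ω ∉ A a → ω ∉ B a → ω ∈ S a)
    (hA : Tendsto (fun a ↦ μ a (A a)) l (𝓝 0)) (hB : Tendsto (fun a ↦ μ a (B a)) l (𝓝 0)) :
    Tendsto (fun a ↦ μ a (S a)) l (𝓝 1) := by
  have hlower : ∀ a, 1 - (μ a (A a) + μ a (B a)) ≤ μ a (S a) := fun a ↦ by
    have hcompl : (S a)ᶜ ⊆ A a ∪ B a := fun ω hω ↦ by
      by_contra h
      rw [Set.mem_union, not_or] at h
      exact hω (hsub a ω h.1 h.2)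
    rw [tsub_le_iff_right]
    calc 1 = μ a Set.univ := measure_univ.symm
      _ ≤ μ a (S a) + μ a (S a)ᶜ := measure_univ_le_add_compl _
      _ ≤ μ a (S a) + (μ a (A a) + μ a (B a)) :=
        add_le_add_right ((measure_mono hcompl).trans (measure_union_le _ _)) _
  have hlim : Tendsto (fun a ↦ 1 - (μ a (A a) + μ a (B a))) l (𝓝 1) := by
    have h := ENNReal.Tendsto.sub tendsto_const_nhds (by simpa using hA.add hB)
      (Or.inl ENNReal.one_ne_top)
    rwa [tsub_zero] at h
  exact tendsto_of_tendsto_of_tendsto_of_le_of_le hlim tendsto_const_nhds hlower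
    fun a ↦ prob_le_one

theorem stmt8_general (α ε : ℝ) (hα : α ∈ Set.Ioo (0 : ℝ) 1) (hε : 0 < ε)
    (n : ℕ → ℕ)
    (Ω : ℕ → Type*) [∀ k, MeasurableSpace (Ω k)]
    (μ : ∀ k, Measure (Ω k)) [∀ k, IsProbabilityMeasure (μ k)]
    (x : ∀ k, Ω k → Fin (n k) → ℝ)
    (K : ∀ k, Finset (Fin (n k))) (hKcard : ∀ k, (K k).card = k)
    (hzero : ∀ k, ∀ ω, ∀ i ∉ K k, x k ω i = 0)
    (hmeas : ∀ k i, Measurable (fun ω => x k ω i))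
    (hindep : ∀ k, iIndepFun
      (fun (i : {i // i ∈ K k}) => fun ω => x k ω i.1) (μ k))
    (hdist : ∀ k, ∀ i ∈ K k, Measure.map (fun ω => x k ω i) (μ k) = gaussianReal 0 1) :
    Tendsto
      (fun k => μ k {ω | ∀ xhat : Fin (n k) → ℝ,
          (∑ i, |x k ω i - xhat i|) ≤ α * ∑ i, |x k ω i| →
          ∀ L : Finset (Fin (n k)), L.card = k →
            (∀ i ∈ L, ∀ j ∉ L, |xhat j| ≤ |xhat i|) →
            ((spt (x k ω) ∩ L).card : ℝ) / k >
              2 * gaussQ (Real.sqrt (-2 * Real.log (1 - α))) - ε})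
      atTop (nhds 1) := by
  obtain ⟨hα₀, hα₁⟩ := hα
  set t := √(-2 * log (1 - α))
  have ht : 0 < t := sqrt_pos.mpr (by linarith [log_neg (by linarith : 0 < 1 - α) (by linarith)])
  have hc : ∫ y, max (|y| - t) 0 ∂gaussianReal 0 1 =
      (1 - α) * (∫ y, |y| ∂gaussianReal 0 1) - t * (2 * gaussQ t) := by
    rw [integral_posPart_abs_sub_gaussianReal_eq ht.le,
      exp_neg_sq_sqrt_neg_two_mul_log_div_two (by linarith) (by linarith)]
  have hsum (f : ℝ → ℝ) (hf : f 0 = 0) (k : ℕ) (ω : Ω k) :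
      ∑ i ∈ K k, f (x k ω i) = ∑ i, f (x k ω i) :=
    sum_subset (subset_univ _) fun i _ hi ↦ by rw [hzero k ω i hi, hf]
  have hlln {f : ℝ → ℝ} (hf : Continuous f) (hf₂ : ∀ y, |f y| ≤ |y|) :=
    tendsto_meas_ge_mul_of_iIndepFun (X := fun k i ω ↦ x k ω i) hKcard
      (fun k i _ ↦ (hmeas k i).aemeasurable) hindep hdist hf.measurable
      ((memLp_id_gaussianReal 2).mono hf.aestronglyMeasurable (ae_of_all _ hf₂))
      (by positivity : 0 < ε * t / 2)
  refine tendsto_measure_one_of_compl_subset_union (fun k ω h₁ h₂ ↦ ?_)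
    (hlln continuous_abs fun y ↦ (abs_abs y).le) (hlln (by fun_prop) (abs_max_abs_sub_le ht.le))
  simp only [Set.mem_ofPred_eq, not_le] at h₁ h₂ ⊢
  intro xhat hle L hL htop
  rw [hsum _ abs_zero] at h₁
  rw [hsum (fun y ↦ max (|y| - t) 0) (by simp [ht.le]), hc] at h₂
  exact sub_lt_card_spt_inter_div _ xhat hα₀.le hα₁.le hε.le ht
    ((card_spt_le (hzero k ω)).trans_eq (hKcard k)) hL htop hle h₁ h₂

/-- Approximate support recovery for random `k`-sparse Gaussian vectors: with probability
tending to `1` as `k → ∞`, every `x̂` with `‖x − x̂‖₁ ≤ α‖x‖₁` and every `k`-support `L` of `x̂`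
satisfy `|K ∩ L|/k > 2Q(√(−2 log(1−α))) − ε`, where `K = supp(x)`. -/
theorem stmt8 (α ε : ℝ) (hα : α ∈ Set.Ioo (0 : ℝ) 1) (hε : 0 < ε)
    (n : ℕ → ℕ) (hn : ∀ k, k ≤ n k)
    (Ω : ℕ → Type*) [∀ k, MeasurableSpace (Ω k)]
    (μ : ∀ k, Measure (Ω k)) [∀ k, IsProbabilityMeasure (μ k)]
    (x : ∀ k, Ω k → Fin (n k) → ℝ)
    (K : ∀ k, Finset (Fin (n k))) (hKcard : ∀ k, (K k).card = k)
    (hzero : ∀ k, ∀ ω, ∀ i ∉ K k, x k ω i = 0)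
    (hnonzero : ∀ k, ∀ ω, ∀ i ∈ K k, x k ω i ≠ 0)
    (hmeas : ∀ k i, Measurable (fun ω => x k ω i))
    (hindep : ∀ k, iIndepFun
      (fun (i : {i // i ∈ K k}) => fun ω => x k ω i.1) (μ k))
    (hdist : ∀ k, ∀ i ∈ K k, Measure.map (fun ω => x k ω i) (μ k) = gaussianReal 0 1) :
    Tendsto
      (fun k => μ k {ω | ∀ xhat : Fin (n k) → ℝ,
          (∑ i, |x k ω i - xhat i|) ≤ α * ∑ i, |x k ω i| →
          ∀ L : Finset (Fin (n k)), L.card = k →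
            (∀ i ∈ L, ∀ j ∉ L, |xhat j| ≤ |xhat i|) →
            ((spt (x k ω) ∩ L).card : ℝ) / k >
              2 * gaussQ (Real.sqrt (-2 * Real.log (1 - α))) - ε})
      atTop (nhds 1) :=
  stmt8_general α ε hα hε n Ω μ x K hKcard hzero hmeas hindep hdist
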